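/- If there exists a (t+1)-extremal graph G containing a clique of size k, then s(t+1) ≥ s(t) + k. In particular, s(t+1) ≥ s(t) + 2 for every t ∈ ℕ. -/

import Mathlib

open SimpleGraph

/-- Independence number: maximum size of an independent (stable) set. -/
noncomputable def indepNum {V : Type*} [Fintype V] (G : SimpleGraph V) : ℕ :=
  sSup {n | ∃ s : Finset V, (s : Set V).Pairwise (fun a b => ¬ G.Adj a b) ∧ s.card = n}

/-- Clique cover number: minimum number of cliques covering all vertices. -/
noncomputable def cliqueCoverNum {V : Type*} [Fintype V] (G : SimpleGraph V) : ℕ :=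
  sInf {n | ∃ P : Finset (Finset V),
    (∀ c ∈ P, G.IsClique (c : Set V)) ∧ (∀ v : V, ∃ c ∈ P, v ∈ c) ∧ P.card = n}

/-- The (covering) gap of a graph: θ(G) - α(G). -/
noncomputable def gap {V : Type*} [Fintype V] (G : SimpleGraph V) : ℕ :=
  cliqueCoverNum G - _root_.indepNum G

/-- s(t): smallest number of vertices of a graph with gap t. -/
noncomputable def sFun (t : ℕ) : ℕ :=
  sInf {n | ∃ G : SimpleGraph (Fin n), gap G = t}

/-!
Deleting a clique `Q` costs at most one in the clique cover number and nothing in the independence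
number, so it lowers the gap by at most one. Applied to a graph of gap `t + 1` this leaves a graph of
gap at least `t` on `n - |Q|` vertices, and deleting further vertices one at a time reaches a graph
of gap exactly `t`; hence `s(t) ≤ s(t + 1) - |Q|`.

For the second claim the infimum defining `s(t + 1)` must be attained, i.e. some graph has gap
`t + 1`: `t + 1` disjoint copies of `C₅` do, since `α(C₅) = 2` and `θ(C₅) = 3`. An extremal graph
has an edge, since an edgeless graph has gap `0`, and an edge is a clique of size `2`.
-/

open Finset

section
variable {V W : Type*} {G : SimpleGraph V} {H : SimpleGraph W}

lemma SimpleGraph.IsIndepSet.preimage (f : H ↪g G) {s : Set V} (hs : G.IsIndepSet s) :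
    H.IsIndepSet (f ⁻¹' s) :=
  fun _ ha _ hb hab => by simpa using hs ha hb (f.injective.ne hab)

lemma SimpleGraph.IsIndepSet.image (f : H ↪g G) {s : Set W} (hs : H.IsIndepSet s) :
    G.IsIndepSet (f '' s) := by
  rintro _ ⟨a, ha, rfl⟩ _ ⟨b, hb, rfl⟩ hab
  simpa using hs ha hb (ne_of_apply_ne f hab)

lemma SimpleGraph.IsClique.preimage (f : H ↪g G) {s : Set V} (hs : G.IsClique s) :
    H.IsClique (f ⁻¹' s) :=
  fun _ ha _ hb hab => by simpa using hs ha hb (f.injective.ne hab)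

lemma SimpleGraph.IsClique.image (f : H ↪g G) {s : Set W} (hs : H.IsClique s) :
    G.IsClique (f '' s) := by
  rintro _ ⟨a, ha, rfl⟩ _ ⟨b, hb, rfl⟩ hab
  simpa using hs ha hb (ne_of_apply_ne f hab)

lemma indepNum_eq_simpleGraph_indepNum [Fintype V] (G : SimpleGraph V) :
    _root_.indepNum G = G.indepNum := by
  unfold _root_.indepNum SimpleGraph.indepNum
  congr 1
  ext n
  exact ⟨fun ⟨s, hs, hn⟩ => ⟨s, ⟨hs, hn⟩⟩, fun ⟨s, hs⟩ => ⟨s, hs.isIndepSet, hs.card_eq⟩⟩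

lemma indepNum_le_of_embedding [Fintype V] (f : H ↪g G) : H.indepNum ≤ G.indepNum := by
  obtain ⟨s, hs⟩ := H.exists_isNIndepSet_indepNum
  rw [← hs.card_eq, ← s.card_map f.toEmbedding]
  apply IsIndepSet.card_le_indepNum
  simpa using hs.isIndepSet.image f

def SimpleGraph.IsCliqueCover (G : SimpleGraph V) (P : Finset (Finset V)) : Prop :=
  (∀ c ∈ P, G.IsClique (c : Set V)) ∧ ∀ v, ∃ c ∈ P, v ∈ c

lemma SimpleGraph.IsCliqueCover.cliqueCoverNum_le [Fintype V] {P : Finset (Finset V)}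
    (hP : G.IsCliqueCover P) : cliqueCoverNum G ≤ #P :=
  Nat.sInf_le ⟨P, hP.1, hP.2, rfl⟩

lemma isCliqueCover_image_singleton [Fintype V] [DecidableEq V] :
    G.IsCliqueCover (univ.image singleton) := by
  refine ⟨?_, fun v => ⟨{v}, mem_image_of_mem _ (mem_univ v), mem_singleton_self v⟩⟩
  simp

lemma cliqueCoverNum_le_card [Fintype V] : cliqueCoverNum G ≤ Fintype.card V := by
  classical
  exact isCliqueCover_image_singleton.cliqueCoverNum_le.trans card_image_le

lemma exists_isCliqueCover_card_eq [Fintype V] (G : SimpleGraph V) :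
    ∃ P, G.IsCliqueCover P ∧ #P = cliqueCoverNum G := by
  classical
  have hsingle := isCliqueCover_image_singleton (G := G)
  have hne : {n | ∃ P : Finset (Finset V), (∀ c ∈ P, G.IsClique (c : Set V)) ∧
      (∀ v, ∃ c ∈ P, v ∈ c) ∧ #P = n}.Nonempty :=
    ⟨_, _, hsingle.1, hsingle.2, rfl⟩
  obtain ⟨P, hclique, hcover, hcard⟩ := Nat.sInf_mem hne
  exact ⟨P, ⟨hclique, hcover⟩, hcard⟩

lemma SimpleGraph.IsCliqueCover.cliqueCoverNum_le_card_filter [Fintype W] (f : H ↪g G)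
    {P : Finset (Finset V)} (hP : G.IsCliqueCover P)
    [DecidablePred fun c : Finset V => ∃ w, f w ∈ c] :
    cliqueCoverNum H ≤ #{c ∈ P | ∃ w, f w ∈ c} := by
  classical
  refine (IsCliqueCover.cliqueCoverNum_le (P := {c ∈ P | ∃ w, f w ∈ c}.image
    (·.preimage f f.injective.injOn)) ⟨?_, fun w => ?_⟩).trans card_image_le
  · simp only [mem_image, mem_filter]
    rintro _ ⟨c, ⟨hc, -⟩, rfl⟩
    simpa using (hP.1 c hc).preimage f
  · obtain ⟨c, hc, hw⟩ := hP.2 (f w)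
    exact ⟨_, mem_image_of_mem _ (mem_filter.2 ⟨hc, w, hw⟩), by simpa using hw⟩

lemma cliqueCoverNum_le_of_embedding [Fintype V] [Fintype W] (f : H ↪g G) :
    cliqueCoverNum H ≤ cliqueCoverNum G := by
  classical
  obtain ⟨P, hP, hcard⟩ := exists_isCliqueCover_card_eq G
  exact (hP.cliqueCoverNum_le_card_filter f).trans (hcard ▸ card_filter_le _ _)

lemma gap_congr [Fintype V] [Fintype W] (e : H ≃g G) : gap H = gap G := by
  have h₁ := indepNum_le_of_embedding e.toEmbedding
  have h₂ := indepNum_le_of_embedding e.symm.toEmbedding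
  have h₃ := cliqueCoverNum_le_of_embedding e.toEmbedding
  have h₄ := cliqueCoverNum_le_of_embedding e.symm.toEmbedding
  rw [gap, gap, indepNum_eq_simpleGraph_indepNum, indepNum_eq_simpleGraph_indepNum]
  omega

end

section
variable {V : Type*} [Fintype V] {G : SimpleGraph V}

lemma exists_adj_of_gap_pos (h : 0 < gap G) : ∃ a b, G.Adj a b := by
  by_contra! hno
  have huniv : G.IsIndepSet (univ : Finset V) := fun a _ b _ _ => hno a b
  have hα := huniv.card_le_indepNum
  have hθ := cliqueCoverNum_le_card (G := G)
  rw [card_univ] at hα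
  rw [gap, indepNum_eq_simpleGraph_indepNum] at h
  omega

lemma cliqueCoverNum_le_induce_compl_add_one [DecidableEq V] {Q : Finset V}
    (hQ : G.IsClique (Q : Set V)) :
    cliqueCoverNum G ≤ cliqueCoverNum (G.induce (Q : Set V)ᶜ) + 1 := by
  obtain ⟨P, hP, hcard⟩ := exists_isCliqueCover_card_eq (G.induce (Q : Set V)ᶜ)
  let f := Embedding.induce (G := G) (Q : Set V)ᶜ
  have hcover : G.IsCliqueCover (insert Q (P.image (·.map f.toEmbedding))) := by
    refine ⟨fun c hc => ?_, fun v => ?_⟩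
    · rcases mem_insert.1 hc with rfl | hc
      · exact hQ
      · obtain ⟨d, hd, rfl⟩ := mem_image.1 hc
        simpa using (hP.1 d hd).image f
    · by_cases hv : v ∈ Q
      · exact ⟨Q, mem_insert_self _ _, hv⟩
      · obtain ⟨c, hc, hvc⟩ := hP.2 ⟨v, hv⟩
        exact ⟨_, mem_insert_of_mem (mem_image_of_mem _ hc), mem_map_of_mem _ hvc⟩
  calc cliqueCoverNum G ≤ #(insert Q (P.image (·.map f.toEmbedding))) := hcover.cliqueCoverNum_le
    _ ≤ #(P.image (·.map f.toEmbedding)) + 1 := card_insert_le _ _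
    _ ≤ cliqueCoverNum (G.induce (Q : Set V)ᶜ) + 1 := by grw [card_image_le, hcard]

lemma gap_le_gap_induce_compl_add_one [DecidableEq V] {Q : Finset V}
    (hQ : G.IsClique (Q : Set V)) : gap G ≤ gap (G.induce (Q : Set V)ᶜ) + 1 := by
  have hα := indepNum_le_of_embedding (Embedding.induce (G := G) (Q : Set V)ᶜ)
  have hθ := cliqueCoverNum_le_induce_compl_add_one hQ
  rw [gap, gap, indepNum_eq_simpleGraph_indepNum, indepNum_eq_simpleGraph_indepNum]
  omega

lemma card_compl_coe_finset [DecidableEq V] (Q : Finset V) :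
    Fintype.card ↥(Q : Set V)ᶜ = Fintype.card V - #Q := by
  simp only [Fintype.card_compl_set, coe_sort_coe, Fintype.card_coe]

lemma exists_fin_gap_eq_of_le_gap {t : ℕ} (G : SimpleGraph V) (h : t ≤ gap G) :
    ∃ m ≤ Fintype.card V, ∃ H : SimpleGraph (Fin m), gap H = t := by
  induction hn : Fintype.card V using Nat.strong_induction_on generalizing V with
  | _ n ih =>
    rcases h.eq_or_lt with rfl | hlt
    · exact ⟨n, le_rfl, G.overFin hn, (gap_congr (G.overFinIso hn)).symm⟩
    obtain ⟨v, -, -⟩ := exists_adj_of_gap_pos (G := G) (by omega)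
    classical
    have hcard : Fintype.card ↥(({v} : Finset V) : Set V)ᶜ < n := by
      rw [card_compl_coe_finset, card_singleton, ← hn]
      exact Nat.sub_one_lt (Fintype.card_pos_iff.2 ⟨v⟩).ne'
    have hgap := gap_le_gap_induce_compl_add_one (G := G) (Q := {v}) (by simp)
    obtain ⟨m, hm, H, hH⟩ := ih _ hcard (G.induce _) (by omega) rfl
    exact ⟨m, hm.trans hcard.le, H, hH⟩

lemma sFun_le_card_of_le_gap {t : ℕ} (h : t ≤ gap G) : sFun t ≤ Fintype.card V := by
  obtain ⟨m, hm, H, hH⟩ := exists_fin_gap_eq_of_le_gap G h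
  exact le_trans (Nat.sInf_le ⟨H, hH⟩ : sFun t ≤ m) hm

lemma exists_gap_eq_sFun {t : ℕ} (h : t ≤ gap G) : ∃ H : SimpleGraph (Fin (sFun t)), gap H = t := by
  obtain ⟨m, -, H, hH⟩ := exists_fin_gap_eq_of_le_gap G h
  exact Nat.sInf_mem (s := {n | ∃ H : SimpleGraph (Fin n), gap H = t}) ⟨m, H, hH⟩

lemma sFun_add_card_le_of_isClique {t : ℕ} (hG : t + 1 ≤ gap G) {Q : Finset V}
    (hQ : G.IsClique (Q : Set V)) : sFun t + #Q ≤ Fintype.card V := by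
  classical
  have hgap := gap_le_gap_induce_compl_add_one hQ
  have hs := sFun_le_card_of_le_gap (G := G.induce (Q : Set V)ᶜ) (t := t) (by omega)
  rw [card_compl_coe_finset] at hs
  have := Q.card_le_univ
  omega

end

section
variable {V ι : Type*} [Fintype V] [Fintype ι] (G : SimpleGraph V)

lemma indepNum_boxProd_bot_le :
    (G □ (⊥ : SimpleGraph ι)).indepNum ≤ Fintype.card ι * G.indepNum := by
  classical
  obtain ⟨s, hs⟩ := (G □ (⊥ : SimpleGraph ι)).exists_isNIndepSet_indepNum
  let f j := boxProdLeft G (⊥ : SimpleGraph ι) j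
  have hfiber j :
      {x ∈ s | x.2 = j} = (s.preimage (f j) (f j).injective.injOn).map (f j).toEmbedding := by
    ext ⟨a, i⟩
    simp only [mem_filter, mem_map, mem_preimage, f, RelEmbedding.coe_toEmbedding,
      boxProdLeft_apply, Prod.mk.injEq]
    grind
  calc (G □ (⊥ : SimpleGraph ι)).indepNum = ∑ j, #{x ∈ s | x.2 = j} := by
        rw [← hs.card_eq, card_eq_sum_card_fiberwise (fun x _ => mem_univ x.2)]
    _ ≤ ∑ _j : ι, G.indepNum := sum_le_sum fun j _ => by
        rw [hfiber, card_map]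
        exact IsIndepSet.card_le_indepNum (by simpa using hs.isIndepSet.preimage (f j))
    _ = Fintype.card ι * G.indepNum := by simp

lemma card_mul_cliqueCoverNum_le_boxProd_bot :
    Fintype.card ι * cliqueCoverNum G ≤ cliqueCoverNum (G □ (⊥ : SimpleGraph ι)) := by
  classical
  obtain ⟨P, hP, hcard⟩ := exists_isCliqueCover_card_eq (G □ (⊥ : SimpleGraph ι))
  let f j := boxProdLeft G (⊥ : SimpleGraph ι) j
  let column j := {c ∈ P | ∃ a, f j a ∈ c}
  have hdisj : (Set.univ : Set ι).PairwiseDisjoint column := by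
    intro i _ j _ hij
    refine disjoint_left.2 fun c hci hcj => ?_
    obtain ⟨hc, a, ha⟩ := mem_filter.1 hci
    obtain ⟨-, b, hb⟩ := mem_filter.1 hcj
    have hadj := hP.1 c hc ha hb (by simpa [f] using fun _ => hij)
    simp only [f, boxProdLeft_apply, boxProd_adj, bot_adj, false_and, or_false] at hadj
    exact hij hadj.2
  calc Fintype.card ι * cliqueCoverNum G = ∑ _j : ι, cliqueCoverNum G := by simp
    _ ≤ ∑ j, #(column j) := sum_le_sum fun j _ => hP.cliqueCoverNum_le_card_filter (f j)
    _ = #(univ.biUnion column) := (card_biUnion (by simpa using hdisj)).symm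
    _ ≤ #P := card_le_card (biUnion_subset.2 fun j _ => filter_subset _ _)
    _ = cliqueCoverNum (G □ (⊥ : SimpleGraph ι)) := hcard

lemma card_mul_gap_le_gap_boxProd_bot :
    Fintype.card ι * gap G ≤ gap (G □ (⊥ : SimpleGraph ι)) := by
  have hα := indepNum_boxProd_bot_le G (ι := ι)
  have hθ := card_mul_cliqueCoverNum_le_boxProd_bot G (ι := ι)
  rw [gap, gap, indepNum_eq_simpleGraph_indepNum, indepNum_eq_simpleGraph_indepNum, Nat.mul_sub]
  omega

lemma card_le_cliqueNum_mul_cliqueCoverNum :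
    Fintype.card V ≤ G.cliqueNum * cliqueCoverNum G := by
  classical
  obtain ⟨P, hP, hcard⟩ := exists_isCliqueCover_card_eq G
  calc Fintype.card V = #(univ : Finset V) := card_univ.symm
    _ ≤ #(P.biUnion id) := card_le_card fun v _ => mem_biUnion.2 (hP.2 v)
    _ ≤ ∑ c ∈ P, #c := card_biUnion_le
    _ ≤ ∑ _c ∈ P, G.cliqueNum := sum_le_sum fun c hc => (hP.1 c hc).card_le_cliqueNum
    _ = G.cliqueNum * cliqueCoverNum G := by rw [sum_const, hcard, smul_eq_mul, mul_comm]

end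

lemma card_le_two_of_pairwise {α : Type*} {r : α → α → Prop} {s : Finset α}
    (hs : (s : Set α).Pairwise r)
    (h : ∀ a b c, a ≠ b → a ≠ c → b ≠ c → ¬(r a b ∧ r a c ∧ r b c)) : #s ≤ 2 := by
  by_contra! hs3
  obtain ⟨a, ha, b, hb, c, hc, hab, hac, hbc⟩ := two_lt_card.1 hs3
  exact h a b c hab hac hbc ⟨hs ha hb hab, hs ha hc hac, hs hb hc hbc⟩

lemma indepNum_cycleGraph_five_le : (cycleGraph 5).indepNum ≤ 2 := by
  obtain ⟨s, hs⟩ := (cycleGraph 5).exists_isNIndepSet_indepNum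
  exact hs.card_eq ▸ card_le_two_of_pairwise hs.isIndepSet (by decide)

lemma cliqueNum_cycleGraph_five_le : (cycleGraph 5).cliqueNum ≤ 2 := by
  obtain ⟨s, hs⟩ := (cycleGraph 5).exists_isNClique_cliqueNum
  exact hs.card_eq ▸ card_le_two_of_pairwise hs.isClique (by decide)

lemma one_le_gap_cycleGraph_five : 1 ≤ gap (cycleGraph 5) := by
  have h5 := card_le_cliqueNum_mul_cliqueCoverNum (cycleGraph 5)
  have hω := Nat.mul_le_mul_right (cliqueCoverNum (cycleGraph 5)) cliqueNum_cycleGraph_five_le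
  have hα := indepNum_cycleGraph_five_le
  rw [Fintype.card_fin] at h5
  rw [gap, indepNum_eq_simpleGraph_indepNum]
  omega

lemma le_gap_cycleGraph_five_boxProd_bot (t : ℕ) :
    t ≤ gap (cycleGraph 5 □ (⊥ : SimpleGraph (Fin t))) := by
  have := card_mul_gap_le_gap_boxProd_bot (cycleGraph 5) (ι := Fin t)
  have := Nat.mul_le_mul_left t one_le_gap_cycleGraph_five
  rw [Fintype.card_fin] at *
  omega

theorem sFun_jump :
    (∀ t k : ℕ,
      (∃ G : SimpleGraph (Fin (sFun (t + 1))), gap G = t + 1 ∧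
        ∃ Q : Finset (Fin (sFun (t + 1))), G.IsClique (Q : Set (Fin (sFun (t + 1)))) ∧
          Q.card = k) →
      sFun (t + 1) ≥ sFun t + k) ∧
    ∀ t : ℕ, sFun (t + 1) ≥ sFun t + 2 := by
  refine ⟨fun t k ⟨G, hG, Q, hQ, hk⟩ => ?_, fun t => ?_⟩
  · simpa [hk] using sFun_add_card_le_of_isClique hG.ge hQ
  · obtain ⟨G, hG⟩ := exists_gap_eq_sFun (le_gap_cycleGraph_five_boxProd_bot (t + 1))
    obtain ⟨a, b, hab⟩ := exists_adj_of_gap_pos (G := G) (by omega)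
    have hpair : G.IsClique (({a, b} : Finset _) : Set _) := by simpa using fun _ => hab
    simpa [card_pair hab.ne] using sFun_add_card_le_of_isClique hG.ge hpair
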